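/- arXiv:2312.10599 — 4 statements merged into one kernel-verified Lean document; each statement's English description precedes it below -/
import Mathlib

section
/- If a graph G has a feasible pre-assignment of size at most k under the Include model, then G has a feasible pre-assignment of size at most k under the Exclude model. -/
variable {V : Type*} [Fintype V] [DecidableEq V]

/-- `C` is a vertex cover of `G`: every edge has an endpoint in `C`. -/
def IsVertexCover (G : SimpleGraph V) (C : Finset V) : Prop :=
  ∀ ⦃u v : V⦄, G.Adj u v → u ∈ C ∨ v ∈ C

/-- `C` is a minimum vertex cover of `G`. -/
def IsMinVertexCover (G : SimpleGraph V) (C : Finset V) : Prop :=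
  IsVertexCover G C ∧ ∀ D : Finset V, IsVertexCover G D → C.card ≤ D.card

/-- The vertex cover number τ(G). -/
noncomputable def tau (G : SimpleGraph V) : ℕ :=
  sInf {n : ℕ | ∃ C : Finset V, IsVertexCover G C ∧ C.card = n}

/-- `I` is an independent set of `G`. -/
def IsIndepSet (G : SimpleGraph V) (I : Finset V) : Prop :=
  ∀ u ∈ I, ∀ v ∈ I, ¬ G.Adj u v

/-- `D` is a dominating set of `G`. -/
def IsDomSet (G : SimpleGraph V) (D : Finset V) : Prop :=
  ∀ v : V, v ∈ D ∨ ∃ u ∈ D, G.Adj u v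

/-- N(X): vertices outside `X` adjacent to some vertex of `X`. -/
def NFinset (G : SimpleGraph V) [DecidableRel G.Adj] (X : Finset V) : Finset V :=
  (X.biUnion fun v => G.neighborFinset v) \ X

/-- `C` is a vertex cover of the induced subgraph `G - S` (vertices outside `S`). -/
def IsVCOutside (G : SimpleGraph V) (S C : Finset V) : Prop :=
  Disjoint C S ∧ ∀ ⦃u v : V⦄, G.Adj u v → u ∉ S → v ∉ S → u ∈ C ∨ v ∈ C

/-- `C` is a minimum vertex cover of the induced subgraph `G - S`. -/
def IsMinVCOutside (G : SimpleGraph V) (S C : Finset V) : Prop :=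
  IsVCOutside G S C ∧ ∀ D : Finset V, IsVCOutside G S D → C.card ≤ D.card

/-- Feasibility under the Include model. -/
def FeasibleInclude (G : SimpleGraph V) (U : Finset V) : Prop :=
  ∃! C : Finset V, IsMinVertexCover G C ∧ U ⊆ C

/-- Feasibility under the Exclude model. -/
def FeasibleExclude (G : SimpleGraph V) (U : Finset V) : Prop :=
  ∃! C : Finset V, IsMinVertexCover G C ∧ Disjoint C U

/-- Feasibility under the Mixed model. -/
def FeasibleMixed (G : SimpleGraph V) (Uin Uex : Finset V) : Prop :=
  ∃! C : Finset V, IsMinVertexCover G C ∧ Uin ⊆ C ∧ Disjoint C Uex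

/-- The graph `G'` obtained by attaching a pendant vertex `Sum.inr v`
to each vertex `Sum.inl v` of `G`. -/
def pendant (G : SimpleGraph V) : SimpleGraph (V ⊕ V) where
  Adj x y :=
    match x, y with
    | Sum.inl u, Sum.inl v => G.Adj u v
    | Sum.inl u, Sum.inr v => u = v
    | Sum.inr u, Sum.inl v => u = v
    | Sum.inr _, Sum.inr _ => False
  symm := by
    constructor
    rintro (u | u) (v | v) h
    · exact h.symm
    · exact h.symm
    · exact h.symm
    · exact h
  loopless := by
    constructor
    rintro (u | u) h
    · exact G.irrefl h
    · exact h

/-! Every vertex `u` of a minimum vertex cover `C` has a neighbour outside `C`, since otherwise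
`C.erase u` would be a smaller cover. Excluding one such neighbour of each vertex of an
Include-feasible pre-assignment `U` forces every vertex cover avoiding the excluded vertices to
contain `U`, so the unique minimum cover containing `U` is also the unique one avoiding them. -/

section

variable {α : Type*} {G : SimpleGraph α}

theorem IsMinVertexCover.exists_adj_notMem [DecidableEq α] {C : Finset α}
    (hC : IsMinVertexCover G C) {u : α} (hu : u ∈ C) : ∃ w, G.Adj u w ∧ w ∉ C := by
  by_contra! hN
  have hcov : IsVertexCover G (C.erase u) := by
    intro a b hab
    simp only [Finset.mem_erase]
    rcases eq_or_ne a u with rfl | ha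
    · exact Or.inr ⟨hab.ne.symm, hN b hab⟩
    rcases eq_or_ne b u with rfl | hb
    · exact Or.inl ⟨hab.ne, hN a hab.symm⟩
    exact (hC.1 hab).imp (⟨ha, ·⟩) (⟨hb, ·⟩)
  exact (Finset.card_erase_lt_of_mem hu).not_ge (hC.2 _ hcov)

theorem IsVertexCover.subset_of_disjoint {D U W : Finset α} (hD : IsVertexCover G D)
    (hDW : Disjoint D W) (hUW : ∀ u ∈ U, ∃ w ∈ W, G.Adj u w) : U ⊆ D := by
  intro u hu
  obtain ⟨w, hw, huw⟩ := hUW u hu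
  exact (hD huw).resolve_right (Finset.disjoint_right.mp hDW hw)

theorem FeasibleInclude.exists_feasibleExclude_card_le [DecidableEq α] {U : Finset α}
    (hU : FeasibleInclude G U) : ∃ W : Finset α, FeasibleExclude G W ∧ W.card ≤ U.card := by
  obtain ⟨C, ⟨hC, hUC⟩, hC_unique⟩ := hU
  choose! f hf_adj hf_notMem using fun u (hu : u ∈ U) => hC.exists_adj_notMem (hUC hu)
  have hCW : Disjoint C (U.image f) := by
    rw [Finset.disjoint_right, Finset.forall_mem_image]
    exact hf_notMem
  refine ⟨U.image f, ⟨C, ⟨hC, hCW⟩, fun D ⟨hD, hDW⟩ => hC_unique D ⟨hD, ?_⟩⟩, Finset.card_image_le⟩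
  exact hD.1.subset_of_disjoint hDW fun u hu => ⟨f u, Finset.mem_image_of_mem f hu, hf_adj u hu⟩

end

/-- Include-feasible of size ≤ k implies Exclude-feasible of size ≤ k. -/
theorem stmt2 (G : SimpleGraph V) (k : ℕ)
    (h : ∃ U : Finset V, FeasibleInclude G U ∧ U.card ≤ k) :
    ∃ U : Finset V, FeasibleExclude G U ∧ U.card ≤ k := by
  obtain ⟨U, hU, hUk⟩ := h
  obtain ⟨W, hW, hWU⟩ := hU.exists_feasibleExclude_card_le
  exact ⟨W, hW, hWU.trans hUk⟩
end

section
/- Let G be a graph and (Ũ_in, Ũ_ex) a feasible pre-assignment of G under the Mixed model. Then the graph G − (Ũ_in ∪ N(Ũ_ex)) has a unique minimum vertex cover, and its size is τ(G) − |Ũ_in ∪ N(Ũ_ex)|. -/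
/-!
Let `C` be the unique minimum vertex cover of `G` respecting `(Uin, Uex)` and `S = Uin ∪ N(Uex)`.
Since `C` avoids `Uex`, it contains `N(Uex)`, hence `S ⊆ C`, and `C \ S` is a minimum vertex
cover of `G − S` of size `τ(G) − |S|`. Conversely, for a minimum cover `D` of `G − S`, the set
`D ∪ S` is a minimum vertex cover of `G`. A vertex of `Uex` has all its neighbours in `S`, so it
lies in no minimum cover of `G − S`; thus `D ∪ S` respects the pre-assignment, and `D ∪ S = C`.
-/

variable {V : Type*} [Fintype V] [DecidableEq V]

open Finset

section

variable {α : Type*} {G : SimpleGraph α} {C D S X : Finset α}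

theorem IsMinVertexCover.tau_eq (hC : IsMinVertexCover G C) : tau G = C.card :=
  le_antisymm (Nat.sInf_le ⟨C, hC.1, rfl⟩)
    (le_csInf ⟨_, C, hC.1, rfl⟩ (by rintro _ ⟨D, hD, rfl⟩; exact hC.2 D hD))

theorem mem_NFinset [Fintype α] [DecidableEq α] [DecidableRel G.Adj] {v : α} :
    v ∈ NFinset G X ↔ (∃ u ∈ X, G.Adj u v) ∧ v ∉ X := by
  simp [NFinset]

theorem IsVertexCover.mem_of_adj_of_disjoint (hC : IsVertexCover G C) (hX : Disjoint C X)
    {u v : α} (hu : u ∈ X) (huv : G.Adj u v) : v ∈ C :=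
  (hC huv).resolve_left fun huC => disjoint_left.1 hX huC hu

theorem IsVertexCover.NFinset_subset [Fintype α] [DecidableEq α] [DecidableRel G.Adj]
    (hC : IsVertexCover G C) (hX : Disjoint C X) : NFinset G X ⊆ C := fun _ hv =>
  let ⟨⟨_, hu, huv⟩, _⟩ := mem_NFinset.1 hv
  hC.mem_of_adj_of_disjoint hX hu huv

theorem IsVertexCover.mem_NFinset_of_adj [Fintype α] [DecidableEq α] [DecidableRel G.Adj]
    (hC : IsVertexCover G C) (hX : Disjoint C X) {u v : α} (hu : u ∈ X)
    (huv : G.Adj u v) : v ∈ NFinset G X :=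
  mem_NFinset.2 ⟨⟨u, hu, huv⟩, disjoint_left.1 hX (hC.mem_of_adj_of_disjoint hX hu huv)⟩

theorem IsVertexCover.sdiff [DecidableEq α] (hC : IsVertexCover G C) (S : Finset α) :
    IsVCOutside G S (C \ S) :=
  ⟨sdiff_disjoint, fun _ _ huv hu hv =>
    (hC huv).imp (fun h => mem_sdiff.2 ⟨h, hu⟩) (fun h => mem_sdiff.2 ⟨h, hv⟩)⟩

theorem IsVCOutside.union [DecidableEq α] (hD : IsVCOutside G S D) :
    IsVertexCover G (D ∪ S) := by
  intro u v huv
  by_cases hu : u ∈ S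
  · exact Or.inl (mem_union_right _ hu)
  by_cases hv : v ∈ S
  · exact Or.inr (mem_union_right _ hv)
  exact (hD.2 huv hu hv).imp (mem_union_left _) (mem_union_left _)

theorem IsMinVertexCover.sdiff_isMinVCOutside [DecidableEq α] (hC : IsMinVertexCover G C)
    (hS : S ⊆ C) : IsMinVCOutside G S (C \ S) := by
  refine ⟨hC.1.sdiff S, fun D hD => ?_⟩
  have hCD : C.card ≤ D.card + S.card :=
    (hC.2 _ hD.union).trans (card_union_le _ _)
  rw [card_sdiff_of_subset hS]
  omega

theorem IsMinVCOutside.union_isMinVertexCover [DecidableEq α] (hD : IsMinVCOutside G S D)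
    (hC : IsMinVertexCover G C) (hS : S ⊆ C) : IsMinVertexCover G (D ∪ S) := by
  refine ⟨hD.1.union, fun E hE => ?_⟩
  have hDC : D.card ≤ C.card - S.card :=
    card_sdiff_of_subset hS ▸ hD.2 _ (hC.1.sdiff S)
  have hSC : S.card ≤ C.card := card_le_card hS
  rw [card_union_of_disjoint hD.1.1]
  exact (show D.card + S.card ≤ C.card by omega).trans (hC.2 E hE)

theorem IsMinVCOutside.notMem_of_forall_adj_mem [DecidableEq α] (hD : IsMinVCOutside G S D)
    {d : α} (hd : ∀ v, G.Adj d v → v ∈ S) : d ∉ D := by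
  intro hdD
  have herase : IsVCOutside G S (D.erase d) := by
    refine ⟨disjoint_of_subset_left (erase_subset _ _) hD.1.1, fun u v huv hu hv => ?_⟩
    refine (hD.1.2 huv hu hv).imp
      (fun h => mem_erase.2 ⟨?_, h⟩) (fun h => mem_erase.2 ⟨?_, h⟩)
    · rintro rfl
      exact hv (hd v huv)
    · rintro rfl
      exact hu (hd u huv.symm)
  have := hD.2 _ herase
  rw [card_erase_of_mem hdD] at this
  have := card_pos.2 ⟨d, hdD⟩
  omega

end

/-- if (Ũin, Ũex) is Mixed-feasible, then G − (Ũin ∪ N(Ũex)) has a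
unique minimum vertex cover, of size τ(G) − |Ũin ∪ N(Ũex)|. -/
theorem stmt5 (G : SimpleGraph V) [DecidableRel G.Adj] (Uin Uex : Finset V)
    (h : FeasibleMixed G Uin Uex) :
    (∃! C : Finset V, IsMinVCOutside G (Uin ∪ NFinset G Uex) C) ∧
      (∀ C : Finset V, IsMinVCOutside G (Uin ∪ NFinset G Uex) C →
        C.card = tau G - (Uin ∪ NFinset G Uex).card) := by
  obtain ⟨C, ⟨hC, hin, hex⟩, huniq⟩ := h
  set S := Uin ∪ NFinset G Uex
  have hS : S ⊆ C := union_subset hin (hC.1.NFinset_subset hex)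
  have hSex : Disjoint S Uex :=
    disjoint_union_left.2 ⟨disjoint_of_subset_left hin hex, sdiff_disjoint⟩
  have hunique : ∀ D, IsMinVCOutside G S D → D = C \ S := by
    intro D hD
    have hDex : Disjoint D Uex := disjoint_right.2 fun u hu =>
      hD.notMem_of_forall_adj_mem fun _ huv =>
        mem_union_right _ (hC.1.mem_NFinset_of_adj hex hu huv)
    have hDS : D ∪ S = C := huniq _ ⟨hD.union_isMinVertexCover hC hS,
      subset_union_left.trans subset_union_right, disjoint_union_left.2 ⟨hDex, hSex⟩⟩
    rw [← hDS, union_sdiff_right, sdiff_eq_self_of_disjoint hD.1.1]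
  refine ⟨⟨C \ S, hC.sdiff_isMinVCOutside hS, hunique⟩, fun D hD => ?_⟩
  rw [hunique D hD, card_sdiff_of_subset hS, hC.tau_eq]
end

section
/- Let G be a graph, G' the graph obtained by attaching a pendant vertex v' to each v ∈ V(G), and let v' be a pendant vertex with unique neighbor v. If (Ũ_in, Ũ_ex) is a feasible pre-assignment of G' under the Mixed model with v' ∈ Ũ_in, then (Ũ_in \ {v'}, Ũ_ex ∪ {v}) is also a feasible pre-assignment of G' under the Mixed model. -/
variable {V : Type*} [Fintype V] [DecidableEq V]

/-! A minimum vertex cover never contains both a pendant vertex `x` and its neighbour `y`,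
since dropping `x` would leave a smaller cover. So the unique cover forced by
`(Uin, Uex)` with `x ∈ Uin` avoids `y`; conversely any minimum cover avoiding `y` must
contain `x` to cover the edge `xy`, so the pre-assignment `(Uin \ {x}, Uex ∪ {y})`
singles out the same cover. -/

section PendantVertex

variable {α : Type*} [DecidableEq α] {G : SimpleGraph α} {C : Finset α} {x y : α}

theorem IsVertexCover.erase_of_neighbors_subset (hC : IsVertexCover G C)
    (hN : ∀ z, G.Adj x z → z ∈ C) : IsVertexCover G (C.erase x) := by
  intro u w huw
  by_cases hu : u = x
  · subst hu
    exact Or.inr (Finset.mem_erase.mpr ⟨huw.ne.symm, hN w huw⟩)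
  by_cases hw : w = x
  · subst hw
    exact Or.inl (Finset.mem_erase.mpr ⟨huw.ne, hN u huw.symm⟩)
  rcases hC huw with h | h
  · exact Or.inl (Finset.mem_erase.mpr ⟨hu, h⟩)
  · exact Or.inr (Finset.mem_erase.mpr ⟨hw, h⟩)

theorem IsMinVertexCover.exists_adj_notMem_s10 (hC : IsMinVertexCover G C) (hx : x ∈ C) :
    ∃ z, G.Adj x z ∧ z ∉ C := by
  by_contra! hN
  have hle := hC.2 _ (hC.1.erase_of_neighbors_subset hN)
  have hlt := Finset.card_erase_lt_of_mem hx
  omega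

theorem IsMinVertexCover.notMem_of_pendant (hC : IsMinVertexCover G C) (hx : x ∈ C)
    (hpend : ∀ z, G.Adj x z → z = y) : y ∉ C := by
  obtain ⟨z, hxz, hz⟩ := hC.exists_adj_notMem_s10 hx
  rwa [← hpend z hxz]

theorem FeasibleMixed.erase_insert_of_pendant {Uin Uex : Finset α}
    (h : FeasibleMixed G Uin Uex) (hxU : x ∈ Uin) (hxy : G.Adj x y)
    (hpend : ∀ z, G.Adj x z → z = y) :
    FeasibleMixed G (Uin.erase x) (insert y Uex) := by
  obtain ⟨C, ⟨hC, hin, hex⟩, huniq⟩ := h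
  have hyC : y ∉ C := hC.notMem_of_pendant (hin hxU) hpend
  refine ⟨C, ⟨hC, (Finset.erase_subset x Uin).trans hin,
    Finset.disjoint_insert_right.mpr ⟨hyC, hex⟩⟩, ?_⟩
  rintro D ⟨hD, hDin, hDex⟩
  obtain ⟨hyD, hDex⟩ := Finset.disjoint_insert_right.mp hDex
  have hxD : x ∈ D := (hD.1 hxy).resolve_right hyD
  refine huniq D ⟨hD, ?_, hDex⟩
  rw [← Finset.insert_erase hxU]
  exact Finset.insert_subset hxD hDin

end PendantVertex

theorem pendant_adj_inr {V : Type*} (G : SimpleGraph V) (v : V) (w : V ⊕ V) :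
    (pendant G).Adj (Sum.inr v) w ↔ w = Sum.inl v := by
  rcases w with w | w
  · exact ⟨fun h => congrArg Sum.inl h.symm, fun h => (Sum.inl_injective h).symm⟩
  · exact ⟨False.elim, fun h => Sum.inl_ne_inr h.symm |>.elim⟩

/-- if (Ũin, Ũex) is Mixed-feasible for G' with the pendant vertex
v' ∈ Ũin, then (Ũin \ {v'}, Ũex ∪ {v}) is also Mixed-feasible for G'. -/
theorem stmt10 (G : SimpleGraph V) (v : V) (Uin Uex : Finset (V ⊕ V))
    (h : FeasibleMixed (pendant G) Uin Uex) (hv : Sum.inr v ∈ Uin) :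
    FeasibleMixed (pendant G) (Uin.erase (Sum.inr v)) (insert (Sum.inl v) Uex) :=
  h.erase_insert_of_pendant hv ((pendant_adj_inr G v _).mpr rfl)
    fun _ => (pendant_adj_inr G v _).mp
end

section
/- Let G be a graph and G' be obtained by attaching a pendant vertex to each vertex of G. If G' has a feasible pre-assignment of size at most k under the Mixed model, then G has an independent dominating set of size at most k. Conversely, if G has an independent dominating set of size at most k, then G' has a feasible pre-assignment of size at most k under the Mixed model. -/
variable {V : Type*} [Fintype V] [DecidableEq V]

/-!
Minimum vertex covers of `pendant G` are exactly the sets consisting of the pendant copies of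
the vertices of an independent set `I` of `G` and the original copies of all other vertices.
A pre-assignment thus forces a set `A` of vertices into `I` and a set `B` out of it, and it is
feasible iff exactly one independent `I` satisfies `A ⊆ I` and `I ∩ B = ∅`. Uniqueness forces
`I = A` (else drop a vertex) and makes `I` dominate every vertex outside `B` (else add it);
a maximal independent set between `I` and `I ∪ B` then dominates `G` and has at most
`|A| + |B|` vertices. Conversely, an independent dominating set `D` is the only independent
superset of itself, so pre-assigning the pendant copies of `D` is feasible.
-/

open Finset

@[simp] lemma Finset.toLeft_empty {α β : Type*} : (∅ : Finset (α ⊕ β)).toLeft = ∅ := rfl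

@[simp] lemma Finset.toRight_empty {α β : Type*} : (∅ : Finset (α ⊕ β)).toRight = ∅ := rfl

section IndepSet

variable {V : Type*} {G : SimpleGraph V} {I J D A B : Finset V}

lemma isIndepSet_empty : IsIndepSet G ∅ := fun _ hu => absurd hu (notMem_empty _)

lemma IsIndepSet.mono (hI : IsIndepSet G I) (hJI : J ⊆ I) : IsIndepSet G J :=
  fun u hu v hv => hI u (hJI hu) v (hJI hv)

lemma IsDomSet.eq_of_subset (hD : IsDomSet G D) (hJ : IsIndepSet G J) (hDJ : D ⊆ J) :
    J = D := by
  refine Subset.antisymm (fun v hv => ?_) hDJ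
  rcases hD v with hvD | ⟨u, hu, huv⟩
  · exact hvD
  · exact absurd huv (hJ u (hDJ hu) v hv)

variable [DecidableEq V]

lemma IsIndepSet.insert (hI : IsIndepSet G I) {v : V} (hv : ∀ u ∈ I, ¬ G.Adj u v) :
    IsIndepSet G (insert v I) := by
  intro a ha b hb hab
  simp only [mem_insert] at ha hb
  rcases ha with rfl | ha <;> rcases hb with rfl | hb
  · exact G.loopless.irrefl _ hab
  · exact hv b hb hab.symm
  · exact hv a ha hab
  · exact hI a ha b hb hab

lemma eq_of_forall_isIndepSet_eq (hI : IsIndepSet G I ∧ A ⊆ I ∧ Disjoint I B)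
    (huniq : ∀ J, IsIndepSet G J ∧ A ⊆ J ∧ Disjoint J B → J = I) : I = A := by
  obtain ⟨hI, hAI, hIB⟩ := hI
  refine Subset.antisymm (fun v hvI => ?_) hAI
  by_contra hvA
  have := huniq (I.erase v) ⟨hI.mono (erase_subset v I),
    fun u hu => mem_erase.2 ⟨fun h => hvA (h ▸ hu), hAI hu⟩,
    disjoint_of_subset_left (erase_subset v I) hIB⟩
  exact notMem_erase v I (by rw [this]; exact hvI)

lemma exists_adj_of_forall_isIndepSet_eq (hI : IsIndepSet G I ∧ A ⊆ I ∧ Disjoint I B)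
    (huniq : ∀ J, IsIndepSet G J ∧ A ⊆ J ∧ Disjoint J B → J = I) {v : V} (hvI : v ∉ I)
    (hvB : v ∉ B) : ∃ u ∈ I, G.Adj u v := by
  obtain ⟨hI, hAI, hIB⟩ := hI
  by_contra! hv
  have := huniq (insert v I)
    ⟨hI.insert hv, hAI.trans (subset_insert v I), disjoint_insert_left.2 ⟨hvB, hIB⟩⟩
  exact hvI (by rw [← this]; exact mem_insert_self v I)

lemma exists_isIndepSet_isDomSet_of_existsUnique [Fintype V]
    (h : ∃! I, IsIndepSet G I ∧ A ⊆ I ∧ Disjoint I B) :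
    ∃ D, IsIndepSet G D ∧ IsDomSet G D ∧ D.card ≤ A.card + B.card := by
  obtain ⟨I, hI, huniq⟩ := h
  obtain ⟨D, hID, hDmax⟩ := Finite.exists_le_maximal
    (p := fun J => IsIndepSet G J ∧ J ⊆ I ∪ B) (a := I) ⟨hI.1, subset_union_left⟩
  obtain ⟨hD, hDIB⟩ := hDmax.prop
  refine ⟨D, hD, fun v => ?_, ?_⟩
  · by_cases hvD : v ∈ D
    · exact Or.inl hvD
    by_contra! hv
    by_cases hvB : v ∈ B
    · exact hvD (hDmax.eq_of_le ⟨hD.insert hv.2, insert_subset (mem_union_right I hvB) hDIB⟩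
        (subset_insert v D) ▸ mem_insert_self v D)
    · obtain ⟨u, hu, huv⟩ :=
        exists_adj_of_forall_isIndepSet_eq hI huniq (fun h => hvD (hID h)) hvB
      exact hv.2 u (hID hu) huv
  · calc D.card ≤ (I ∪ B).card := card_le_card hDIB
      _ ≤ I.card + B.card := card_union_le I B
      _ = A.card + B.card := by rw [eq_of_forall_isIndepSet_eq hI huniq]

end IndepSet

section Pendant

variable {G : SimpleGraph V} {C : Finset (V ⊕ V)}

def pendantCover (I : Finset V) : Finset (V ⊕ V) := Iᶜ.disjSum I

lemma pendantCover_injective : Function.Injective (pendantCover (V := V)) :=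
  fun I J h => by simpa [pendantCover] using congrArg toRight h

lemma card_pendantCover (I : Finset V) : (pendantCover I).card = Fintype.card V := by
  rw [pendantCover, card_disjSum, card_compl_add_card]

lemma IsVertexCover.toLeft_union_toRight_pendant (hC : IsVertexCover (pendant G) C) :
    C.toLeft ∪ C.toRight = univ :=
  eq_univ_of_forall fun v => by simpa using hC (show (pendant G).Adj (.inl v) (.inr v) from rfl)

lemma IsVertexCover.card_le_pendant (hC : IsVertexCover (pendant G) C) :
    Fintype.card V ≤ C.card :=
  calc Fintype.card V = (C.toLeft ∪ C.toRight).card := by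
        rw [hC.toLeft_union_toRight_pendant, card_univ]
    _ ≤ C.toLeft.card + C.toRight.card := card_union_le _ _
    _ = C.card := card_toLeft_add_card_toRight

lemma IsIndepSet.isVertexCover_pendantCover {I : Finset V} (hI : IsIndepSet G I) :
    IsVertexCover (pendant G) (pendantCover I) := by
  rintro (u | u) (v | v) huv
  · simp only [pendantCover, inl_mem_disjSum, mem_compl]
    by_contra! h
    exact hI u h.1 v h.2 huv
  all_goals simp_all [pendant, pendantCover, em, em']

lemma IsIndepSet.isMinVertexCover_pendantCover {I : Finset V} (hI : IsIndepSet G I) :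
    IsMinVertexCover (pendant G) (pendantCover I) :=
  ⟨hI.isVertexCover_pendantCover, fun _ hD => card_pendantCover I ▸ hD.card_le_pendant⟩

/-- A minimum vertex cover has `|V|` vertices, hence exactly one end of each pendant edge. -/
lemma IsMinVertexCover.eq_pendantCover (hC : IsMinVertexCover (pendant G) C) :
    IsIndepSet G C.toRight ∧ C = pendantCover C.toRight := by
  have hcard : C.card ≤ Fintype.card V := card_pendantCover (∅ : Finset V) ▸
    hC.2 _ isIndepSet_empty.isVertexCover_pendantCover
  have huniv := hC.1.toLeft_union_toRight_pendant
  have hdisj : Disjoint C.toLeft C.toRight := by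
    rw [← card_union_eq_card_add_card, card_toLeft_add_card_toRight, huniv, card_univ]
    exact le_antisymm hC.1.card_le_pendant hcard
  have hcompl : C.toLeft = C.toRightᶜ :=
    eq_compl_iff_isCompl.2 ⟨hdisj, codisjoint_iff.2 huniv⟩
  refine ⟨fun u hu v hv huv => ?_, by rw [pendantCover, ← hcompl, toLeft_disjSum_toRight]⟩
  rcases hC.1 (show (pendant G).Adj (.inl u) (.inl v) from huv) with h | h
  · exact disjoint_left.1 hdisj (mem_toLeft.2 h) hu
  · exact disjoint_left.1 hdisj (mem_toLeft.2 h) hv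

lemma pendantCover_subset_disjoint_iff {I : Finset V} {Uin Uex : Finset (V ⊕ V)} :
    Uin ⊆ pendantCover I ∧ Disjoint (pendantCover I) Uex ↔
      Uin.toRight ∪ Uex.toLeft ⊆ I ∧ Disjoint I (Uin.toLeft ∪ Uex.toRight) := by
  simp only [pendantCover, subset_iff, disjoint_left, Sum.forall, inl_mem_disjSum,
    inr_mem_disjSum, mem_compl, mem_toLeft, mem_toRight, mem_union]
  grind

lemma feasibleMixed_pendant_iff {Uin Uex : Finset (V ⊕ V)} :
    FeasibleMixed (pendant G) Uin Uex ↔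
      ∃! I, IsIndepSet G I ∧ Uin.toRight ∪ Uex.toLeft ⊆ I ∧
        Disjoint I (Uin.toLeft ∪ Uex.toRight) := by
  constructor
  · rintro ⟨C, ⟨hC, hCU⟩, huniq⟩
    obtain ⟨hI, hCeq⟩ := hC.eq_pendantCover
    rw [hCeq, pendantCover_subset_disjoint_iff] at hCU
    refine ⟨C.toRight, ⟨hI, hCU⟩, fun J ⟨hJ, hJU⟩ => pendantCover_injective ?_⟩
    exact (huniq _ ⟨hJ.isMinVertexCover_pendantCover,
      pendantCover_subset_disjoint_iff.2 hJU⟩).trans hCeq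
  · rintro ⟨I, ⟨hI, hIU⟩, huniq⟩
    refine ⟨pendantCover I, ⟨hI.isMinVertexCover_pendantCover,
      pendantCover_subset_disjoint_iff.2 hIU⟩, fun C ⟨hC, hCU⟩ => ?_⟩
    obtain ⟨hJ, hCeq⟩ := hC.eq_pendantCover
    rw [hCeq, pendantCover_subset_disjoint_iff] at hCU
    rw [hCeq, huniq _ ⟨hJ, hCU⟩]

end Pendant

/-- G' has a Mixed-feasible pre-assignment of size ≤ k iff G has an
independent dominating set of size ≤ k. -/
theorem stmt12 (G : SimpleGraph V) (k : ℕ) :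
    (∃ Uin Uex : Finset (V ⊕ V),
        FeasibleMixed (pendant G) Uin Uex ∧ Uin.card + Uex.card ≤ k) ↔
      (∃ D : Finset V, IsIndepSet G D ∧ IsDomSet G D ∧ D.card ≤ k) := by
  constructor
  · rintro ⟨Uin, Uex, hfeas, hk⟩
    obtain ⟨D, hD, hDdom, hDcard⟩ :=
      exists_isIndepSet_isDomSet_of_existsUnique (feasibleMixed_pendant_iff.1 hfeas)
    refine ⟨D, hD, hDdom, ?_⟩
    have := card_union_le Uin.toRight Uex.toLeft
    have := card_union_le Uin.toLeft Uex.toRight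
    have := card_toLeft_add_card_toRight (u := Uin)
    have := card_toLeft_add_card_toRight (u := Uex)
    omega
  · rintro ⟨D, hD, hDdom, hk⟩
    refine ⟨(∅ : Finset V).disjSum D, ∅, feasibleMixed_pendant_iff.2 ?_, by simpa using hk⟩
    simp only [toLeft_disjSum, toRight_disjSum, toLeft_empty, toRight_empty, union_empty]
    exact ⟨D, ⟨hD, subset_rfl, disjoint_empty_right D⟩,
      fun J ⟨hJ, hDJ, _⟩ => hDdom.eq_of_subset hJ hDJ⟩
end
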